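/- Let D be a preferential-attachment degree process started at time t₀. Let 0 < ε ≤ 1/40 and let t be a real number with t > 1/ε⁶ and ⌊t⌋ ≥ t₀. For every integer k ≥ 1 define δₖ = ε/k^{2/3}, hₖ = ∏_{i=1}^{k−1}(1 + δᵢ), and c⁻ₖ = ∏_{i=1}^{k−1}(1 + δᵢ/2 − 2δᵢ²). Then for every integer k ≥ 1 and every natural number d with ℙ[D(⌊t⌋) = d] > 0: ℙ[ D(⌊(1+δₖ)·hₖ·t⌋) < (1 + δₖ/2 − 2δₖ²)·D(⌊hₖ·t⌋) and D(⌊hₖ·t⌋) ≥ c⁻ₖ·d | D(⌊t⌋) = d ] ≤ exp(−(1/16)·δₖ³·c⁻ₖ·d). -/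

import Mathlib

open MeasureTheory ProbabilityTheory Real

/-- A preferential-attachment degree process started at time `t₀`, on a probability
space with filtration `ℱ`: an adapted `ℕ`-valued process `D` with `1 ≤ D t₀ ≤ 2 t₀` a.s.,
increments in `{0,1}` a.s., and conditional increment probability
`D (s-1) / (2 s - 1)` given `ℱ (s-1)`. -/
structure PAProcess {Ω : Type*} [m0 : MeasurableSpace Ω] (μ : Measure Ω)
    (ℱ : Filtration ℕ m0) (t₀ : ℕ) where
  D : ℕ → Ω → ℕ
  adapted : ∀ s : ℕ, Measurable[ℱ s] (D s)
  init : ∀ᵐ ω ∂μ, 1 ≤ D t₀ ω ∧ D t₀ ω ≤ 2 * t₀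
  incr : ∀ s : ℕ, t₀ < s → ∀ᵐ ω ∂μ, D s ω = D (s - 1) ω ∨ D s ω = D (s - 1) ω + 1
  cond : ∀ s : ℕ, t₀ < s →
      μ[Set.indicator {ω' | D s ω' = D (s - 1) ω' + 1} (fun _ => (1 : ℝ)) | ℱ (s - 1)]
        =ᵐ[μ] fun ω => (D (s - 1) ω : ℝ) / (2 * s - 1)

/-!
A Chernoff bound driven by an exponential supermartingale. Write `δ = δ_k`, `x = h_k t`,
`n₁ = ⌊x⌋`, `n₂ = ⌊(1 + δ) x⌋` and `β = 1 + δ/2 - 2δ²`. Given `ℱ s` the increment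
`D (s + 1) - D s` is Bernoulli with mean `D s / (2s + 1)`, so
`E[exp (θ D (s + 1)) | ℱ s] ≤ exp ((θ + (e^θ - 1) / (2s + 1)) D s)`. Iterating this from `n₂`
down to `n₁` with `θ = -δ` lets the exponent drift by at most `(e^{-δ} - 1) / (2n₂ - 1)` per
step. Against the `ℱ n₁`-measurable weight `1{D ⌊t⌋ = d, D n₁ ≥ c_k d} · exp (δβ D n₁)`, which
dominates the event up to the factor `exp (-δ D n₂)`, this bounds the probability of the event
by `exp (κ c_k d) · P(D ⌊t⌋ = d)` with `κ = δβ - δ + (n₂ - n₁)(e^{-δ} - 1) / (2n₂ - 1)`.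
As `n₂ - n₁ ≥ δx - 1`, `n₂ ≤ (1 + δ) x` and `δ² x ≥ 1`, the second-order terms of `κ` cancel and
`κ ≤ -δ³/16`. Finally `δ² x ≥ 1` holds because `t > ε⁻⁶` and
`h_k ≥ exp (3 (1 - ε) ε (k^{1/3} - 1)) ≥ (ε k^{1/3})⁴`.
-/

lemma exp_mul_one_sub_le_one_add {ε y : ℝ} (hy : 0 ≤ y) (hyε : y ≤ ε) :
    exp ((1 - ε) * y) ≤ 1 + y := by
  have hlog : 1 - (1 + y)⁻¹ ≤ log (1 + y) := one_sub_inv_le_log_of_pos (by positivity)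
  have hfrac : (1 - ε) * y ≤ 1 - (1 + y)⁻¹ := by
    have hfac : (1 - ε) * (1 + y) ≤ 1 := by nlinarith
    rw [show 1 - (1 + y)⁻¹ = y / (1 + y) by field_simp; ring, le_div_iff₀ (by positivity)]
    nlinarith [mul_le_mul_of_nonneg_left hfac hy]
  exact (le_log_iff_exp_le (by positivity)).mp (hfrac.trans hlog)

lemma exp_neg_le_one_sub_add_sq {y : ℝ} (hy : 0 ≤ y) : exp (-y) ≤ 1 - y + y ^ 2 := by
  rw [exp_neg]
  calc (exp y)⁻¹ ≤ (1 + y)⁻¹ := inv_anti₀ (by positivity) (by linarith [add_one_le_exp y])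
    _ ≤ 1 - y + y ^ 2 := by
      rw [inv_le_iff_one_le_mul₀ (by positivity)]
      nlinarith [pow_nonneg hy 3]

lemma three_mul_rpow_one_third_sub_one_le_sum (n : ℕ) :
    3 * (((n : ℝ) + 1) ^ (1 / 3 : ℝ) - 1) ≤ ∑ i ∈ Finset.Icc 1 n, 1 / (i : ℝ) ^ (2 / 3 : ℝ) := by
  have hint :
      ∫ x in (1 : ℝ)..1 + n, x ^ (-(2 / 3) : ℝ) = 3 * (((n : ℝ) + 1) ^ (1 / 3 : ℝ) - 1) := by
    rw [integral_rpow (Or.inl (by norm_num))]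
    norm_num [add_comm]
    ring
  have hanti : AntitoneOn (fun x : ℝ => x ^ (-(2 / 3) : ℝ)) (Set.Icc 1 (1 + n)) :=
    (antitoneOn_rpow_Ioi_of_exponent_nonpos (by norm_num)).mono
      fun x hx => lt_of_lt_of_le one_pos hx.1
  rw [← hint]
  refine hanti.integral_le_sum.trans_eq ?_
  rw [← Finset.Ico_add_one_right_eq_Icc, Finset.sum_Ico_eq_sum_range, Nat.add_sub_cancel]
  refine Finset.sum_congr rfl fun i _ => ?_
  rw [rpow_neg (by positivity), one_div, Nat.cast_add, Nat.cast_one]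

lemma pow_four_le_prod_one_add {ε : ℝ} (hε0 : 0 < ε) (hε : ε ≤ 1 / 40) {k : ℕ} (hk : 1 ≤ k) :
    (ε * (k : ℝ) ^ (1 / 3 : ℝ)) ^ 4
      ≤ ∏ i ∈ Finset.Icc 1 (k - 1), (1 + ε / (i : ℝ) ^ (2 / 3 : ℝ)) := by
  set s := ε * (k : ℝ) ^ (1 / 3 : ℝ)
  have hterm : ∀ i ∈ Finset.Icc 1 (k - 1),
      0 ≤ ε / (i : ℝ) ^ (2 / 3 : ℝ) ∧ ε / (i : ℝ) ^ (2 / 3 : ℝ) ≤ ε :=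
    fun i hi => ⟨by positivity, div_le_self hε0.le
      (one_le_rpow (by exact_mod_cast (Finset.mem_Icc.mp hi).1) (by norm_num))⟩
  rcases le_or_gt s 1 with hs | hs
  · calc s ^ 4 ≤ 1 := pow_le_one₀ (by positivity) hs
      _ ≤ _ := Finset.one_le_prod fun i hi => by linarith [(hterm i hi).1]
  set y := 3 * (1 - ε) * (s - ε)
  have hy : 5 / 2 * s ≤ y := by
    have := mul_le_mul (a := 39 / 40) (b := 1 - ε) (c := 39 / 40 * s) (d := s - ε)
      (by linarith) (by linarith) (by linarith) (by linarith)
    linarith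
  have hsum := three_mul_rpow_one_third_sub_one_le_sum (k - 1)
  rw [Nat.cast_sub hk, Nat.cast_one, sub_add_cancel] at hsum
  calc s ^ 4 ≤ y ^ 4 / (4 : ℕ).factorial := by
        rw [le_div_iff₀ (by positivity), show ((4 : ℕ).factorial : ℝ) = 24 by rfl]
        nlinarith [pow_le_pow_left₀ (by linarith) hy 4, pow_nonneg (by linarith : (0 : ℝ) ≤ s) 4]
    _ ≤ exp y := pow_div_factorial_le_exp y (by linarith) 4
    _ ≤ exp ((1 - ε) * ε * ∑ i ∈ Finset.Icc 1 (k - 1), 1 / (i : ℝ) ^ (2 / 3 : ℝ)) :=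
        exp_le_exp.mpr (by
          have h1ε : 0 ≤ (1 - ε) * ε := by nlinarith
          have := mul_le_mul_of_nonneg_left hsum h1ε
          simp only [y, s] at this ⊢
          linarith)
    _ ≤ _ := by
        rw [Finset.mul_sum, exp_sum]
        refine Finset.prod_le_prod (fun i _ => by positivity) fun i hi => ?_
        rw [mul_assoc, mul_one_div]
        exact exp_mul_one_sub_le_one_add (hterm i hi).1 (hterm i hi).2

lemma one_div_sq_le_prod_div {ε : ℝ} (hε0 : 0 < ε) (hε : ε ≤ 1 / 40) {k : ℕ} (hk : 1 ≤ k) :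
    1 / (ε / (k : ℝ) ^ (2 / 3 : ℝ)) ^ 2
      ≤ (∏ i ∈ Finset.Icc 1 (k - 1), (1 + ε / (i : ℝ) ^ (2 / 3 : ℝ))) / ε ^ 6 := by
  have hk0 : (0 : ℝ) ≤ k := Nat.cast_nonneg k
  have hpow : (k : ℝ) ^ (2 / 3 : ℝ) = ((k : ℝ) ^ (1 / 3 : ℝ)) ^ 2 := by
    rw [← rpow_natCast, ← rpow_mul hk0]
    norm_num
  calc 1 / (ε / (k : ℝ) ^ (2 / 3 : ℝ)) ^ 2 = (ε * (k : ℝ) ^ (1 / 3 : ℝ)) ^ 4 / ε ^ 6 := by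
        rw [hpow]
        field_simp
    _ ≤ _ := div_le_div_of_nonneg_right (pow_four_le_prod_one_add hε0 hε hk) (by positivity)

lemma sub_sq_div_le_floor_sub_floor_div {δ x : ℝ} (hδ0 : 0 < δ) (hδ1 : δ ≤ 1) (hx : 1 / δ ^ 2 ≤ x) :
    (δ - δ ^ 2) / (2 * (1 + δ))
      ≤ ((⌊(1 + δ) * x⌋₊ - ⌊x⌋₊ : ℕ) : ℝ) / (2 * ⌊(1 + δ) * x⌋₊ - 1) := by
  have hδx : 1 ≤ δ ^ 2 * x := by rwa [div_le_iff₀' (by positivity)] at hx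
  have hx0 : 0 < x := by nlinarith
  have hmono : ⌊x⌋₊ ≤ ⌊(1 + δ) * x⌋₊ := Nat.floor_le_floor (by nlinarith)
  have h1 := Nat.floor_le hx0.le
  have h2 := Nat.floor_le (by positivity : 0 ≤ (1 + δ) * x)
  have h3 := Nat.lt_floor_add_one ((1 + δ) * x)
  have hden : 1 ≤ 2 * (⌊(1 + δ) * x⌋₊ : ℝ) - 1 := by
    have : (1 : ℝ) ≤ ⌊(1 + δ) * x⌋₊ := by
      exact_mod_cast Nat.le_floor (by push_cast; nlinarith)
    linarith
  rw [Nat.cast_sub hmono, div_le_div_iff₀ (by positivity) (by linarith)]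
  nlinarith

lemma drift_le_neg_cube_div {δ r : ℝ} (hδ0 : 0 < δ) (hδ : δ ≤ 1 / 40)
    (hr : (δ - δ ^ 2) / (2 * (1 + δ)) ≤ r) :
    δ * (1 + δ / 2 - 2 * δ ^ 2) - δ + r * (exp (-δ) - 1) ≤ -δ ^ 3 / 16 := by
  have hexp : exp (-δ) - 1 ≤ -(δ - δ ^ 2) := by linarith [exp_neg_le_one_sub_add_sq hδ0.le]
  have hr0 : 0 ≤ r := le_trans (by apply div_nonneg <;> nlinarith) hr
  have hr' : δ ^ 2 / 2 - 31 / 16 * δ ^ 3 ≤ r * (δ - δ ^ 2) := by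
    have hpos : 0 ≤ δ - δ ^ 2 := by nlinarith
    rw [div_le_iff₀ (by positivity)] at hr
    nlinarith [mul_le_mul_of_nonneg_left hr hpos, pow_pos hδ0 3, pow_pos hδ0 4]
  nlinarith [mul_le_mul_of_nonneg_left hexp hr0]

lemma exp_sub_one_div_le {θ' θ a b : ℝ} (hθ' : θ' ≤ θ) (hθ : θ ≤ 0) (ha : 0 < a) (hab : a ≤ b) :
    (exp θ' - 1) / a ≤ (exp θ - 1) / b := by
  have hnum : exp θ' - 1 ≤ exp θ - 1 := by linarith [exp_le_exp.mpr hθ']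
  have hθ1 : exp θ - 1 ≤ 0 := by linarith [exp_le_one_iff.mpr hθ]
  calc (exp θ' - 1) / a ≤ (exp θ - 1) / a := div_le_div_of_nonneg_right hnum ha.le
    _ ≤ (exp θ - 1) / b := by
      rw [div_le_div_iff₀ ha (ha.trans_le hab)]
      nlinarith

lemma MeasureTheory.Integrable.mul_indicator_one {Ω : Type*} [MeasurableSpace Ω] {μ : Measure Ω}
    {Y : Ω → ℝ} (hY : Integrable Y μ) {A : Set Ω} (hA : MeasurableSet A) :
    Integrable (fun ω => Y ω * A.indicator (fun _ => 1) ω) μ := by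
  simpa only [← Set.indicator_mul_right, mul_one] using hY.indicator hA

lemma toReal_cond_le_of_measureReal_inter_le {Ω : Type*} [MeasurableSpace Ω] {μ : Measure Ω}
    {A S : Set Ω} (hA : MeasurableSet A) {r : ℝ} (hr : 0 ≤ r) (h : μ.real (A ∩ S) ≤ r * μ.real A) :
    (μ[|A] S).toReal ≤ r := by
  rw [cond_apply hA, ENNReal.toReal_mul, ENNReal.toReal_inv, ← measureReal_def, ← measureReal_def,
    inv_mul_eq_div]
  exact div_le_of_le_mul₀ measureReal_nonneg hr h

namespace PAProcess

variable {Ω : Type*} [m0 : MeasurableSpace Ω] {μ : Measure Ω} {ℱ : Filtration ℕ m0} {t₀ : ℕ}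
  (P : PAProcess μ ℱ t₀)

lemma measurable_D (s : ℕ) : Measurable (P.D s) := (P.adapted s).mono (ℱ.le s) le_rfl

lemma measurable_cast_D (s : ℕ) : Measurable[ℱ s] fun ω => (P.D s ω : ℝ) :=
  measurable_from_top.comp (P.adapted s)

lemma ae_D_le {s : ℕ} (hs : t₀ ≤ s) : ∀ᵐ ω ∂μ, P.D s ω ≤ t₀ + s := by
  induction s, hs using Nat.le_induction with
  | base => filter_upwards [P.init] with ω hω using by omega
  | succ s hs ih =>
    filter_upwards [ih, P.incr (s + 1) (by omega)] with ω hle hstep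
    rw [Nat.add_sub_cancel] at hstep
    omega

lemma integrable_mul_comp_D [IsFiniteMeasure μ] {s : ℕ} (hs : t₀ ≤ s) {Y : Ω → ℝ}
    (hY : Integrable Y μ) (g : ℕ → ℝ) : Integrable (fun ω => Y ω * g (P.D s ω)) μ := by
  refine hY.mul_bdd (c := ∑ n ∈ Finset.range (t₀ + s + 1), ‖g n‖)
    (measurable_from_top.comp (P.measurable_D s)).aestronglyMeasurable ?_
  filter_upwards [P.ae_D_le hs] with ω hω
  exact Finset.single_le_sum (f := fun n => ‖g n‖) (fun _ _ => norm_nonneg _)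
    (Finset.mem_range.mpr (Nat.lt_succ_of_le hω))

lemma integrable_mul_exp [IsFiniteMeasure μ] {s : ℕ} (hs : t₀ ≤ s) {Y : Ω → ℝ}
    (hY : Integrable Y μ) (θ : ℝ) : Integrable (fun ω => Y ω * exp (θ * P.D s ω)) μ :=
  P.integrable_mul_comp_D hs hY fun n => exp (θ * n)

lemma measurableSet_increment (s : ℕ) : MeasurableSet {ω | P.D (s + 1) ω = P.D s ω + 1} :=
  measurableSet_eq_fun (P.measurable_D (s + 1)) ((P.measurable_D s).add_const 1)

lemma integral_mul_indicator_increment [IsFiniteMeasure μ] {s : ℕ} (hs : t₀ ≤ s) {Y : Ω → ℝ}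
    (hYm : StronglyMeasurable[ℱ s] Y) (hY : Integrable Y μ) :
    ∫ ω, Y ω * {ω | P.D (s + 1) ω = P.D s ω + 1}.indicator (fun _ => 1) ω ∂μ
      = ∫ ω, Y ω * (P.D s ω / (2 * s + 1)) ∂μ := by
  set inc := {ω | P.D (s + 1) ω = P.D s ω + 1}
  have hinc := P.measurableSet_increment s
  have hint_inc : Integrable (inc.indicator fun _ => (1 : ℝ)) μ :=
    (integrable_const 1).indicator hinc
  have hint : Integrable (Y * inc.indicator fun _ => 1) μ := hY.mul_indicator_one hinc
  have hcond := P.cond (s + 1) (by omega)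
  rw [Nat.add_sub_cancel] at hcond
  calc ∫ ω, Y ω * inc.indicator (fun _ => 1) ω ∂μ
      = ∫ ω, μ[Y * inc.indicator (fun _ => 1) | ℱ s] ω ∂μ := (integral_condExp (ℱ.le s)).symm
    _ = ∫ ω, Y ω * (P.D s ω / (2 * s + 1)) ∂μ := by
        refine integral_congr_ae
          ((condExp_mul_of_stronglyMeasurable_left hYm hint hint_inc).trans ?_)
        filter_upwards [hcond] with ω hω
        rw [Pi.mul_apply, hω]
        push_cast
        ring

lemma integral_mul_exp_succ_le [IsFiniteMeasure μ] {s : ℕ} (hs : t₀ ≤ s) {Y : Ω → ℝ}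
    (hYm : StronglyMeasurable[ℱ s] Y) (hY : Integrable Y μ) (hY0 : 0 ≤ Y) (θ : ℝ) :
    ∫ ω, Y ω * exp (θ * P.D (s + 1) ω) ∂μ
      ≤ ∫ ω, Y ω * exp ((θ + (exp θ - 1) / (2 * s + 1)) * P.D s ω) ∂μ := by
  set Z := fun ω => Y ω * exp (θ * P.D s ω)
  have hZm : StronglyMeasurable[ℱ s] Z :=
    hYm.mul (measurable_exp.comp ((P.measurable_cast_D s).const_mul θ)).stronglyMeasurable
  have hZ : Integrable Z μ := P.integrable_mul_exp hs hY θ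
  set inc := {ω | P.D (s + 1) ω = P.D s ω + 1}
  have hZinc : Integrable (fun ω => Z ω * inc.indicator (fun _ => 1) ω) μ :=
    hZ.mul_indicator_one (P.measurableSet_increment s)
  have hsplit : (fun ω => Y ω * exp (θ * P.D (s + 1) ω)) =ᵐ[μ]
      fun ω => Z ω + (exp θ - 1) * (Z ω * inc.indicator (fun _ => 1) ω) := by
    filter_upwards [P.incr (s + 1) (by omega)] with ω hω
    rw [Nat.add_sub_cancel] at hω
    rcases hω with hω | hω
    · rw [Set.indicator_of_notMem (by simp [inc, hω]), hω]
      ring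
    · rw [Set.indicator_of_mem (show ω ∈ inc from hω), hω, Nat.cast_succ, mul_add_one, exp_add]
      ring
  have hZD : Integrable (fun ω => Z ω * (P.D s ω / (2 * s + 1))) μ :=
    P.integrable_mul_comp_D hs hZ fun n => n / (2 * s + 1)
  calc ∫ ω, Y ω * exp (θ * P.D (s + 1) ω) ∂μ
      = ∫ ω, Z ω + (exp θ - 1) * (Z ω * (P.D s ω / (2 * s + 1))) ∂μ := by
        rw [integral_congr_ae hsplit, integral_add hZ (hZinc.const_mul _), integral_const_mul,
          P.integral_mul_indicator_increment hs hZm hZ, integral_add hZ (hZD.const_mul _),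
          integral_const_mul]
    _ ≤ _ := by
        refine integral_mono (hZ.add (hZD.const_mul _)) (P.integrable_mul_exp hs hY _) fun ω => ?_
        have hexp := add_one_le_exp ((exp θ - 1) * (P.D s ω / (2 * s + 1)))
        calc Z ω + (exp θ - 1) * (Z ω * (P.D s ω / (2 * s + 1)))
            = Z ω * ((exp θ - 1) * (P.D s ω / (2 * s + 1)) + 1) := by ring
          _ ≤ Z ω * exp ((exp θ - 1) * (P.D s ω / (2 * s + 1))) :=
            mul_le_mul_of_nonneg_left hexp (mul_nonneg (hY0 ω) (exp_pos _).le)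
          _ = _ := by
            simp only [Z, mul_assoc, ← exp_add]
            ring_nf

lemma integral_mul_exp_add_le [IsFiniteMeasure μ] {s : ℕ} (hs : t₀ ≤ s) (j : ℕ) {Y : Ω → ℝ}
    (hYm : StronglyMeasurable[ℱ s] Y) (hY : Integrable Y μ) (hY0 : 0 ≤ Y) {θ : ℝ} (hθ : θ ≤ 0) :
    ∫ ω, Y ω * exp (θ * P.D (s + j) ω) ∂μ
      ≤ ∫ ω, Y ω * exp ((θ + j * ((exp θ - 1) / (2 * (s + j : ℕ) - 1))) * P.D s ω) ∂μ := by
  induction j generalizing s with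
  | zero => simp
  | succ j ih =>
    set q := (exp θ - 1) / (2 * (s + (j + 1) : ℕ) - 1 : ℝ)
    have hq : q ≤ 0 := div_nonpos_of_nonpos_of_nonneg (by linarith [exp_le_one_iff.mpr hθ])
      (by push_cast; linarith)
    have hθ' : θ + j * q ≤ θ := by nlinarith [(Nat.cast_nonneg j : (0 : ℝ) ≤ j)]
    have hih := ih (hs.trans s.le_succ) (hYm.mono (ℱ.mono s.le_succ))
    rw [show s + 1 + j = s + (j + 1) by omega] at hih
    refine hih.trans ((P.integral_mul_exp_succ_le hs hYm hY hY0 _).trans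
      (integral_mono (P.integrable_mul_exp hs hY _) (P.integrable_mul_exp hs hY _) fun ω => ?_))
    have hdrift : (exp (θ + j * q) - 1) / (2 * s + 1) ≤ q :=
      exp_sub_one_div_le hθ' hθ (by positivity)
        (by push_cast; linarith [(Nat.cast_nonneg j : (0 : ℝ) ≤ j)])
    refine mul_le_mul_of_nonneg_left (exp_le_exp.mpr
      (mul_le_mul_of_nonneg_right ?_ (Nat.cast_nonneg _))) (hY0 ω)
    rw [Nat.cast_succ, add_one_mul]
    linarith

lemma measureReal_inter_slow_growth_le [IsFiniteMeasure μ] {s : ℕ} (hs : t₀ ≤ s) (j : ℕ) {A : Set Ω}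
    (hA : MeasurableSet[ℱ s] A) {δ β a : ℝ} (hδ : 0 ≤ δ)
    (hκ : δ * β - δ + j * ((exp (-δ) - 1) / (2 * (s + j : ℕ) - 1)) ≤ 0) :
    μ.real (A ∩ {ω | (P.D (s + j) ω : ℝ) < β * P.D s ω ∧ a ≤ P.D s ω})
      ≤ exp ((δ * β - δ + j * ((exp (-δ) - 1) / (2 * (s + j : ℕ) - 1))) * a) * μ.real A := by
  set κ := δ * β - δ + j * ((exp (-δ) - 1) / (2 * (s + j : ℕ) - 1))
  set B := A ∩ {ω | a ≤ P.D s ω}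
  have hBs : MeasurableSet[ℱ s] B := hA.inter (P.measurable_cast_D s measurableSet_Ici)
  have hB : MeasurableSet B := ℱ.le s _ hBs
  have hA0 : MeasurableSet A := ℱ.le s _ hA
  set Y := fun ω => B.indicator (fun _ => (1 : ℝ)) ω * exp (δ * β * P.D s ω)
  have hYm : StronglyMeasurable[ℱ s] Y :=
    ((measurable_const.indicator hBs).mul
      (measurable_exp.comp ((P.measurable_cast_D s).const_mul _))).stronglyMeasurable
  have hY : Integrable Y μ :=
    P.integrable_mul_exp hs ((integrable_const 1).indicator hB) _
  have hY0 : 0 ≤ Y := fun ω => mul_nonneg (Set.indicator_nonneg (fun _ _ => zero_le_one) ω)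
    (exp_pos _).le
  set S := A ∩ {ω | (P.D (s + j) ω : ℝ) < β * P.D s ω ∧ a ≤ P.D s ω}
  have hD (n : ℕ) : Measurable fun ω => (P.D n ω : ℝ) := measurable_from_top.comp (P.measurable_D n)
  have hS : MeasurableSet S := hA0.inter ((measurableSet_lt (hD _) ((hD s).const_mul β)).inter
    (measurableSet_le measurable_const (hD s)))
  calc μ.real S = ∫ ω, S.indicator 1 ω ∂μ := (integral_indicator_one hS).symm
    _ ≤ ∫ ω, Y ω * exp (-δ * P.D (s + j) ω) ∂μ := by
        refine integral_mono_of_nonneg (ae_of_all _ (Set.indicator_nonneg (fun _ _ => zero_le_one)))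
          (P.integrable_mul_exp (hs.trans (Nat.le_add_right s j)) hY _) (ae_of_all _ fun ω => ?_)
        by_cases hω : ω ∈ S
        · have hωB : ω ∈ B := ⟨hω.1, hω.2.2⟩
          rw [Set.indicator_of_mem hω, Pi.one_apply]
          simp only [Y, Set.indicator_of_mem hωB, one_mul, ← exp_add, one_le_exp_iff]
          nlinarith [hω.2.1]
        · rw [Set.indicator_of_notMem hω]
          exact mul_nonneg (hY0 ω) (exp_pos _).le
    _ ≤ ∫ ω, Y ω * exp ((-δ + j * ((exp (-δ) - 1) / (2 * (s + j : ℕ) - 1))) * P.D s ω) ∂μ :=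
        P.integral_mul_exp_add_le hs j hYm hY hY0 (neg_nonpos.mpr hδ)
    _ ≤ ∫ ω, A.indicator (fun _ => exp (κ * a)) ω ∂μ := by
        refine integral_mono (P.integrable_mul_exp hs hY _)
          ((integrable_const _).indicator hA0) fun ω => ?_
        by_cases hωB : ω ∈ B
        · simp only [Y, Set.indicator_of_mem hωB, Set.indicator_of_mem hωB.1, one_mul, ← exp_add,
            exp_le_exp]
          have := mul_le_mul_of_nonpos_left hωB.2 hκ
          linarith
        · simp only [Y, Set.indicator_of_notMem hωB, zero_mul]
          exact Set.indicator_nonneg (fun _ _ => (exp_pos _).le) ω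
    _ = exp (κ * a) * μ.real A := by
        rw [integral_indicator_const _ hA0, smul_eq_mul, mul_comm]

end PAProcess

theorem single_delta_step_lower_general
    {Ω : Type*} [m0 : MeasurableSpace Ω] (μ : Measure Ω) [IsProbabilityMeasure μ]
    (ℱ : Filtration ℕ m0) (t₀ : ℕ)
    (P : PAProcess μ ℱ t₀)
    (ε t : ℝ) (hε0 : 0 < ε) (hε : ε ≤ 1 / 40) (ht : 1 / ε ^ 6 < t) (ht₀' : t₀ ≤ ⌊t⌋₊)
    (δ h c : ℕ → ℝ)
    (hδ : ∀ i : ℕ, δ i = ε / (i : ℝ) ^ ((2 : ℝ) / 3))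
    (hh : ∀ k : ℕ, h k = ∏ i ∈ Finset.Icc 1 (k - 1), (1 + δ i))
    (hc : ∀ k : ℕ, c k = ∏ i ∈ Finset.Icc 1 (k - 1), (1 + δ i / 2 - 2 * δ i ^ 2))
    (k : ℕ) (hk : 1 ≤ k)
    (d : ℕ) :
    (μ[|{ω | P.D ⌊t⌋₊ ω = d}]
        {ω | (P.D ⌊(1 + δ k) * h k * t⌋₊ ω : ℝ)
              < (1 + δ k / 2 - 2 * δ k ^ 2) * (P.D ⌊h k * t⌋₊ ω : ℝ) ∧
            c k * d ≤ (P.D ⌊h k * t⌋₊ ω : ℝ)}).toReal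
      ≤ Real.exp (-(1 / 16) * δ k ^ 3 * c k * d) := by
  have hδε (i : ℕ) (hi : 1 ≤ i) : 0 < δ i ∧ δ i ≤ ε := by
    rw [hδ i]
    exact ⟨by positivity, div_le_self hε0.le (one_le_rpow (by exact_mod_cast hi) (by norm_num))⟩
  obtain ⟨hδ0, hδk⟩ := hδε k hk
  have hh1 : 1 ≤ h k := hh k ▸ Finset.one_le_prod fun i hi => by
    linarith [(hδε i (Finset.mem_Icc.mp hi).1).1]
  have hc0 : 0 ≤ c k := hc k ▸ Finset.prod_nonneg fun i hi => by
    nlinarith [hδε i (Finset.mem_Icc.mp hi).1]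
  have ht0 : 0 < t := lt_trans (by positivity) ht
  have hx : 1 / δ k ^ 2 ≤ h k * t := by
    have hprod := one_div_sq_le_prod_div hε0 hε hk
    simp only [← hδ, ← hh] at hprod
    calc 1 / δ k ^ 2 ≤ h k * (1 / ε ^ 6) := by rwa [mul_one_div]
      _ ≤ h k * t := mul_le_mul_of_nonneg_left ht.le (by linarith)
  set n₁ := ⌊h k * t⌋₊
  have htn₁ : ⌊t⌋₊ ≤ n₁ := Nat.floor_le_floor (le_mul_of_one_le_left ht0.le hh1)
  obtain ⟨j, hj⟩ : ∃ j, ⌊(1 + δ k) * (h k * t)⌋₊ = n₁ + j :=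
    Nat.exists_eq_add_of_le
      (Nat.floor_le_floor (le_mul_of_one_le_left (by positivity) (by linarith)))
  have hκ := drift_le_neg_cube_div hδ0 (hδk.trans hε)
    (sub_sq_div_le_floor_sub_floor_div hδ0 (by linarith) hx)
  rw [hj, Nat.add_sub_cancel_left, div_mul_eq_mul_div, mul_div_assoc] at hκ
  have hA : MeasurableSet[ℱ n₁] {ω | P.D ⌊t⌋₊ ω = d} :=
    ℱ.mono htn₁ _ (P.adapted _ (measurableSet_singleton d))
  rw [mul_assoc (1 + δ k), hj]
  refine toReal_cond_le_of_measureReal_inter_le (ℱ.le n₁ _ hA) (exp_pos _).le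
    ((P.measureReal_inter_slow_growth_le (ht₀'.trans htn₁) j hA hδ0.le
      (hκ.trans (by nlinarith [pow_pos hδ0 3]))).trans
      (mul_le_mul_of_nonneg_right (exp_le_exp.mpr ?_) measureReal_nonneg))
  nlinarith [mul_le_mul_of_nonneg_right hκ (by positivity : (0 : ℝ) ≤ c k * d)]

theorem single_delta_step_lower
    {Ω : Type*} [m0 : MeasurableSpace Ω] (μ : Measure Ω) [IsProbabilityMeasure μ]
    (ℱ : Filtration ℕ m0) (t₀ : ℕ) (ht₀ : 1 ≤ t₀)
    (P : PAProcess μ ℱ t₀)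
    (ε t : ℝ) (hε0 : 0 < ε) (hε : ε ≤ 1 / 40) (ht : 1 / ε ^ 6 < t) (ht₀' : t₀ ≤ ⌊t⌋₊)
    (δ h c : ℕ → ℝ)
    (hδ : ∀ i : ℕ, δ i = ε / (i : ℝ) ^ ((2 : ℝ) / 3))
    (hh : ∀ k : ℕ, h k = ∏ i ∈ Finset.Icc 1 (k - 1), (1 + δ i))
    (hc : ∀ k : ℕ, c k = ∏ i ∈ Finset.Icc 1 (k - 1), (1 + δ i / 2 - 2 * δ i ^ 2))
    (k : ℕ) (hk : 1 ≤ k)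
    (d : ℕ) (hd : 0 < μ {ω | P.D ⌊t⌋₊ ω = d}) :
    (μ[|{ω | P.D ⌊t⌋₊ ω = d}]
        {ω | (P.D ⌊(1 + δ k) * h k * t⌋₊ ω : ℝ)
              < (1 + δ k / 2 - 2 * δ k ^ 2) * (P.D ⌊h k * t⌋₊ ω : ℝ) ∧
            c k * d ≤ (P.D ⌊h k * t⌋₊ ω : ℝ)}).toReal
      ≤ Real.exp (-(1 / 16) * δ k ^ 3 * c k * d) :=
  single_delta_step_lower_general (m0 := m0) μ ℱ t₀ P ε t hε0 hε ht ht₀' δ h c hδ hh hc k hk d
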